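/- Let p be a prime and C ⊂ ℚ_p be a p-cycle, i.e., a set of p elements such that ∑_{c∈C} χ(c) = 0 where χ is the standard additive character on ℚ_p. Then for every unit x ∈ ℤ_p^×, the set x·C = {x·c : c ∈ C} is also a p-cycle, i.e., ∑_{c∈C} χ(x·c) = 0. -/

import Mathlib

open scoped BigOperators

/-- Every `p`-adic number is within distance `1` of a rational of the form `k / p^n`. -/
theorem padicFrac_exists (p : ℕ) [hp : Fact p.Prime] (x : ℚ_[p]) :
    ∃ kn : ℤ × ℕ, ‖x - (kn.1 : ℚ_[p]) / (p : ℚ_[p]) ^ kn.2‖ ≤ 1 := by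
  obtain ⟨n, hn⟩ := exists_nat_gt ‖x‖
  have hp1 : 1 < (p : ℝ) := by exact_mod_cast hp.out.one_lt
  have hple : (n : ℝ) < (p : ℝ) ^ n := by exact_mod_cast Nat.lt_pow_self hp.out.one_lt
  have hz : ‖x * (p : ℚ_[p]) ^ n‖ ≤ 1 := by
    rw [norm_mul, norm_pow, Padic.norm_p]
    have h1 : ‖x‖ ≤ (p : ℝ) ^ n := le_of_lt (lt_trans hn hple)
    have h2 : (0:ℝ) < (p : ℝ) ^ n := by positivity
    calc ‖x‖ * ((p:ℝ)⁻¹) ^ n ≤ (p : ℝ) ^ n * ((p:ℝ)⁻¹) ^ n := by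
          gcongr
      _ = 1 := by rw [← mul_pow, mul_inv_cancel₀ (by linarith : (0:ℝ) < p).ne', one_pow]
  set z : ℤ_[p] := ⟨x * (p : ℚ_[p]) ^ n, hz⟩ with hzdef
  obtain ⟨y, hy⟩ := Ideal.mem_span_singleton'.mp (PadicInt.appr_spec n z)
  refine ⟨((z.appr n : ℤ), n), ?_⟩
  have hpne : ((p : ℚ_[p]) ^ n) ≠ 0 := by
    apply pow_ne_zero
    exact_mod_cast hp.out.ne_zero
  have hxz : x - ((z.appr n : ℤ) : ℚ_[p]) / (p : ℚ_[p]) ^ n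
      = ((z - (z.appr n : ℤ_[p]) : ℤ_[p]) : ℚ_[p]) / (p : ℚ_[p]) ^ n := by
    push_cast
    field_simp [hzdef]
    first | rfl | simp [hzdef]
  rw [hxz, norm_div]
  have hnorm : ‖((z - (z.appr n : ℤ_[p]) : ℤ_[p]) : ℚ_[p])‖ ≤ ((p:ℝ)⁻¹) ^ n := by
    rw [← PadicInt.norm_def, ← hy]
    rw [norm_mul, norm_pow, PadicInt.norm_p]
    calc ‖y‖ * ((p:ℝ)⁻¹) ^ n ≤ 1 * ((p:ℝ)⁻¹) ^ n := by
          gcongr; exact y.2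
      _ = ((p:ℝ)⁻¹) ^ n := one_mul _
  have hden : ‖(p : ℚ_[p]) ^ n‖ = ((p:ℝ)⁻¹) ^ n := by
    rw [norm_pow, Padic.norm_p]
  rw [hden]
  rw [div_le_one (by positivity)]
  exact hnorm

/-- The standard additive character `χ(x) = e^{2πi {x}}` on `ℚ_p`, where `{x}` is
the `p`-adic fractional part of `x`. -/
noncomputable def stdChar (p : ℕ) [Fact p.Prime] (x : ℚ_[p]) : ℂ :=
  Complex.exp (2 * Real.pi * Complex.I *
    (((Classical.choose (padicFrac_exists p x)).1 : ℂ) /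
      (p : ℂ) ^ (Classical.choose (padicFrac_exists p x)).2))

section helpers

open Polynomial

private lemma padic_int_dvd_of_norm_le (p : ℕ) [hp : Fact p.Prime] (m : ℤ) (N : ℕ)
    (h : ‖(m : ℚ_[p]) / (p : ℚ_[p]) ^ N‖ ≤ 1) : (p : ℤ) ^ N ∣ m := by
  have hp1 : (1:ℝ) < p := by exact_mod_cast hp.out.one_lt
  have hp0 : (0:ℝ) < p := lt_trans one_pos hp1
  rw [← Padic.norm_int_le_pow_iff_dvd]
  rw [norm_div, norm_pow, Padic.norm_p, div_le_one (by positivity)] at h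
  calc ‖(m : ℚ_[p])‖ ≤ ((p:ℝ)⁻¹) ^ N := h
    _ = (p:ℝ) ^ (-(N:ℤ)) := by rw [zpow_neg, zpow_natCast, inv_pow]

private lemma exp_frac_eq (p : ℕ) [hp : Fact p.Prime] (a b : ℤ) (N M : ℕ)
    (h : ‖(a : ℚ_[p]) / (p : ℚ_[p]) ^ N - (b : ℚ_[p]) / (p : ℚ_[p]) ^ M‖ ≤ 1) :
    Complex.exp (2 * Real.pi * Complex.I * ((a : ℂ) / (p : ℂ) ^ N)) =
    Complex.exp (2 * Real.pi * Complex.I * ((b : ℂ) / (p : ℂ) ^ M)) := by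
  have hp0 : (p : ℚ_[p]) ≠ 0 := by exact_mod_cast hp.out.ne_zero
  have hpC : (p : ℂ) ≠ 0 := by exact_mod_cast hp.out.ne_zero
  have hdiff : (a : ℚ_[p]) / (p : ℚ_[p]) ^ N - (b : ℚ_[p]) / (p : ℚ_[p]) ^ M
      = ((a * p ^ M - b * p ^ N : ℤ) : ℚ_[p]) / (p : ℚ_[p]) ^ (N + M) := by
    field_simp
    push_cast
    ring
  rw [hdiff] at h
  obtain ⟨t, ht⟩ := padic_int_dvd_of_norm_le p _ _ h
  have key : (a : ℂ) * (p:ℂ) ^ M - (b:ℂ) * (p:ℂ) ^ N = (p:ℂ) ^ (N + M) * t := by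
    exact_mod_cast congrArg (fun z : ℤ => (z : ℂ)) ht
  have hc : (a : ℂ) / (p:ℂ) ^ N = (b : ℂ) / (p:ℂ) ^ M + t := by
    field_simp
    linear_combination key
  rw [hc, mul_add, Complex.exp_add]
  have h2 : 2 * (Real.pi:ℂ) * Complex.I * (t:ℂ) = (t:ℂ) * (2 * (Real.pi:ℂ) * Complex.I) := by
    ring
  rw [h2, Complex.exp_int_mul_two_pi_mul_I, mul_one]

end helpers

private lemma stdChar_eq_of_close (p : ℕ) [Fact p.Prime] (y : ℚ_[p]) (a : ℤ) (N : ℕ)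
    (h : ‖y - (a : ℚ_[p]) / (p : ℚ_[p]) ^ N‖ ≤ 1) :
    stdChar p y = Complex.exp (2 * Real.pi * Complex.I * ((a : ℂ) / (p : ℂ) ^ N)) := by
  have hspec := Classical.choose_spec (padicFrac_exists p y)
  unfold stdChar
  apply exp_frac_eq
  have hid : ((Classical.choose (padicFrac_exists p y)).1 : ℚ_[p]) /
        (p : ℚ_[p]) ^ (Classical.choose (padicFrac_exists p y)).2 - (a : ℚ_[p]) / (p : ℚ_[p]) ^ N
      = (y - (a : ℚ_[p]) / (p : ℚ_[p]) ^ N) +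
        -(y - ((Classical.choose (padicFrac_exists p y)).1 : ℚ_[p]) /
          (p : ℚ_[p]) ^ (Classical.choose (padicFrac_exists p y)).2) := by
    ring
  rw [hid]
  refine le_trans (Padic.nonarchimedean _ _) (max_le h ?_)
  rw [norm_neg]
  exact hspec

private lemma zpow_eq_pow_toNat_emod (w : ℂ) (n : ℕ) (hn : 0 < n) (hw : w ^ n = 1) (m : ℤ) :
    w ^ m = w ^ ((m % (n : ℤ)).toNat) := by
  have hw0 : w ≠ 0 := by
    intro h0
    rw [h0, zero_pow hn.ne'] at hw
    exact zero_ne_one hw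
  have hnonneg : 0 ≤ m % (n : ℤ) := Int.emod_nonneg m (by exact_mod_cast hn.ne')
  have hdecomp : m = (n : ℤ) * (m / (n:ℤ)) + m % (n:ℤ) := (Int.mul_ediv_add_emod m n).symm
  conv_lhs => rw [hdecomp]
  rw [zpow_add₀ hw0, zpow_mul, zpow_natCast, hw, one_zpow, one_mul,
    ← Int.toNat_of_nonneg hnonneg, zpow_natCast]
  rw [Int.toNat_of_nonneg hnonneg]

theorem stmt4 (p : ℕ) [Fact p.Prime] (C : Finset ℚ_[p]) (hC : C.card = p)
    (hsum : ∑ c ∈ C, stdChar p c = 0) :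
    ∀ x : ℚ_[p], ‖x‖ = 1 → ∑ c ∈ C, stdChar p (x * c) = 0 := by
  intro x hx
  classical
  have hp := (Fact.out : p.Prime)
  have hp1 : (1:ℝ) < p := by exact_mod_cast hp.one_lt
  have hp0 : (0:ℝ) < p := lt_trans one_pos hp1
  have hpQ : (p : ℚ_[p]) ≠ 0 := by exact_mod_cast hp.ne_zero
  have hpC : (p : ℂ) ≠ 0 := by exact_mod_cast hp.ne_zero
  set k : ℚ_[p] → ℤ := fun c => (Classical.choose (padicFrac_exists p c)).1 with hkdef
  set n : ℚ_[p] → ℕ := fun c => (Classical.choose (padicFrac_exists p c)).2 with hndef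
  have hchoose : ∀ c : ℚ_[p], ‖c - (k c : ℚ_[p]) / (p : ℚ_[p]) ^ (n c)‖ ≤ 1 :=
    fun c => Classical.choose_spec (padicFrac_exists p c)
  set K : ℕ := max 1 (C.sup n) with hKdef
  have hK1 : 1 ≤ K := le_max_left _ _
  have hKc : ∀ c ∈ C, n c ≤ K := fun c hc => le_trans (Finset.le_sup hc) (le_max_right _ _)
  -- x is a p-adic integer; approximate it by a natural number u
  set xZ : ℤ_[p] := ⟨x, le_of_eq hx⟩ with hxZ
  set u : ℕ := xZ.appr K with hu
  have huspec : ‖x - ((u : ℕ) : ℚ_[p])‖ ≤ (p:ℝ) ^ (-(K:ℤ)) := by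
    have h1 : ‖xZ - ((u:ℕ) : ℤ_[p])‖ ≤ (p:ℝ) ^ (-(K:ℤ)) :=
      (PadicInt.norm_le_pow_iff_mem_span_pow _ _).mpr (PadicInt.appr_spec K xZ)
    have h2 : ((xZ - ((u:ℕ) : ℤ_[p]) : ℤ_[p]) : ℚ_[p]) = x - ((u:ℕ) : ℚ_[p]) := by
      push_cast
      rfl
    rw [← h2] at *
    exact h1
  have hlt : (p:ℝ) ^ (-(K:ℤ)) < 1 := by
    rw [zpow_neg, zpow_natCast]
    rw [inv_lt_one_iff₀]
    right
    exact one_lt_pow₀ (by exact_mod_cast hp1) (by omega)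
  -- u is a p-adic unit
  have hunorm : ‖((u:ℕ) : ℚ_[p])‖ = 1 := by
    have hne : ‖x‖ ≠ ‖((u:ℕ):ℚ_[p]) - x‖ := by
      rw [hx]
      apply ne_of_gt
      calc ‖((u:ℕ):ℚ_[p]) - x‖ = ‖x - ((u:ℕ):ℚ_[p])‖ := norm_sub_rev _ _
        _ ≤ (p:ℝ) ^ (-(K:ℤ)) := huspec
        _ < 1 := hlt
    calc ‖((u:ℕ) : ℚ_[p])‖ = ‖x + (((u:ℕ):ℚ_[p]) - x)‖ := by ring_nf
      _ = max ‖x‖ ‖((u:ℕ):ℚ_[p]) - x‖ := Padic.add_eq_max_of_ne hne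
      _ = 1 := by
          rw [hx]
          apply max_eq_left
          calc ‖((u:ℕ):ℚ_[p]) - x‖ = ‖x - ((u:ℕ):ℚ_[p])‖ := norm_sub_rev _ _
            _ ≤ (p:ℝ) ^ (-(K:ℤ)) := huspec
            _ ≤ 1 := le_of_lt hlt
  have hpu : ¬ p ∣ u := by
    intro hdvd
    have : ‖((u:ℤ) : ℚ_[p])‖ < 1 := Padic.norm_intCast_lt_one_iff.mpr (by exact_mod_cast hdvd)
    rw [show ((u:ℤ) : ℚ_[p]) = ((u:ℕ) : ℚ_[p]) by push_cast; rfl, hunorm] at this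
    exact lt_irrefl 1 this
  have hcop : Nat.Coprime u (p ^ K) :=
    Nat.Coprime.pow_right K (((Nat.Prime.coprime_iff_not_dvd hp).mpr hpu).symm)
  -- the primitive p^K-th root of unity
  set ζ : ℂ := Complex.exp (2 * Real.pi * Complex.I / (p:ℂ) ^ K) with hζdef
  have hppos : 0 < p ^ K := pow_pos hp.pos K
  have hζ : IsPrimitiveRoot ζ (p ^ K) := by
    have := Complex.isPrimitiveRoot_exp (p ^ K) hppos.ne'
    rwa [show (((p:ℕ) ^ K : ℕ) : ℂ) = (p:ℂ) ^ K by push_cast; ring] at this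
  have hζpow : ζ ^ (p ^ K) = 1 := hζ.pow_eq_one
  have hζ0 : ζ ≠ 0 := Complex.exp_ne_zero _
  set m : ℚ_[p] → ℤ := fun c => k c * (p:ℤ) ^ (K - n c) with hmdef
  set e : ℚ_[p] → ℕ := fun c => (m c % (((p ^ K : ℕ)) : ℤ)).toNat with hedef
  -- m c / p^K = k c / p^(n c)  in ℚ_[p]
  have hfrac : ∀ c ∈ C, ((m c : ℤ) : ℚ_[p]) / (p:ℚ_[p]) ^ K = (k c : ℚ_[p]) / (p:ℚ_[p]) ^ (n c) := by
    intro c hc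
    have hKn : K - n c + n c = K := Nat.sub_add_cancel (hKc c hc)
    rw [hmdef]
    push_cast
    rw [← hKn, pow_add]
    field_simp
    simp
  have hfracC : ∀ c ∈ C, ((m c : ℤ) : ℂ) / (p:ℂ) ^ K
      = (k c : ℂ) / (p:ℂ) ^ (n c) := by
    intro c hc
    have hKn : K - n c + n c = K := Nat.sub_add_cancel (hKc c hc)
    rw [hmdef]
    push_cast
    rw [← hKn, pow_add]
    field_simp
    simp
  have hzpowm : ∀ a : ℤ, ζ ^ a = Complex.exp (2 * Real.pi * Complex.I * ((a:ℂ) / (p:ℂ) ^ K)) := by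
    intro a
    rw [hζdef, ← Complex.exp_int_mul]
    congr 1
    field_simp
  -- Claim A : stdChar p c = ζ ^ e c
  have claimA : ∀ c ∈ C, stdChar p c = ζ ^ (e c) := by
    intro c hc
    have h1 : ‖c - ((m c : ℤ) : ℚ_[p]) / (p:ℚ_[p]) ^ K‖ ≤ 1 := by
      rw [hfrac c hc]; exact hchoose c
    rw [stdChar_eq_of_close p c (m c) K h1, ← hzpowm]
    rw [zpow_eq_pow_toNat_emod ζ (p ^ K) hppos hζpow (m c)]
  -- Claim B : stdChar p (x * c) = (ζ ^ u) ^ e c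
  have hζupow : (ζ ^ u) ^ (p ^ K) = 1 := by
    rw [← pow_mul, mul_comm, pow_mul, hζpow, one_pow]
  have claimB : ∀ c ∈ C, stdChar p (x * c) = (ζ ^ u) ^ (e c) := by
    intro c hc
    have hbound : ‖x * c - (((u:ℤ) * m c : ℤ) : ℚ_[p]) / (p:ℚ_[p]) ^ K‖ ≤ 1 := by
      have hsplit : x * c - (((u:ℤ) * m c : ℤ) : ℚ_[p]) / (p:ℚ_[p]) ^ K
          = x * (c - ((m c : ℤ):ℚ_[p]) / (p:ℚ_[p]) ^ K)
            + (x - ((u:ℕ):ℚ_[p])) * (((m c : ℤ):ℚ_[p]) / (p:ℚ_[p]) ^ K) := by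
        push_cast
        ring
      rw [hsplit]
      refine le_trans (Padic.nonarchimedean _ _) (max_le ?_ ?_)
      · rw [norm_mul, hx, one_mul]
        rw [hfrac c hc]
        exact hchoose c
      · rw [norm_mul]
        have h2 : ‖((m c : ℤ):ℚ_[p]) / (p:ℚ_[p]) ^ K‖ ≤ (p:ℝ) ^ (K:ℤ) := by
          rw [norm_div, norm_pow, Padic.norm_p]
          rw [div_le_iff₀ (by positivity)]
          calc ‖((m c : ℤ):ℚ_[p])‖ ≤ 1 := Padic.norm_int_le_one _
            _ ≤ (p:ℝ) ^ (K:ℤ) * ((p:ℝ)⁻¹) ^ K := by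
                rw [zpow_natCast, inv_pow, mul_inv_cancel₀ (by positivity)]
        calc ‖x - ((u:ℕ):ℚ_[p])‖ * ‖((m c : ℤ):ℚ_[p]) / (p:ℚ_[p]) ^ K‖
            ≤ (p:ℝ) ^ (-(K:ℤ)) * (p:ℝ) ^ (K:ℤ) := by
              exact mul_le_mul huspec h2 (norm_nonneg _) (by positivity)
          _ = 1 := by rw [← zpow_add₀ (ne_of_gt hp0)]; simp
    rw [stdChar_eq_of_close p (x * c) ((u:ℤ) * m c) K hbound, ← hzpowm]
    rw [zpow_mul, zpow_natCast]
    rw [zpow_eq_pow_toNat_emod (ζ ^ u) (p ^ K) hppos hζupow (m c)]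
  -- polynomial argument
  set f : Polynomial ℚ := ∑ c ∈ C, Polynomial.X ^ (e c) with hfdef
  have haevalζ : Polynomial.aeval ζ f = 0 := by
    rw [hfdef, map_sum]
    simp only [map_pow, Polynomial.aeval_X]
    rw [← hsum]
    exact (Finset.sum_congr rfl claimA).symm
  have hmindvd : minpoly ℚ ζ ∣ f := minpoly.dvd ℚ ζ haevalζ
  have hζu : IsPrimitiveRoot (ζ ^ u) (p ^ K) := hζ.pow_of_coprime u hcop
  have hmineq : minpoly ℚ ζ = minpoly ℚ (ζ ^ u) := by
    rw [← Polynomial.cyclotomic_eq_minpoly_rat hζ hppos,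
      ← Polynomial.cyclotomic_eq_minpoly_rat hζu hppos]
  have haevalζu : Polynomial.aeval (ζ ^ u) f = 0 := by
    obtain ⟨g, hg⟩ := hmindvd
    rw [hg, map_mul, hmineq, minpoly.aeval, zero_mul]
  calc ∑ c ∈ C, stdChar p (x * c) = ∑ c ∈ C, (ζ ^ u) ^ (e c) :=
        Finset.sum_congr rfl claimB
    _ = Polynomial.aeval (ζ ^ u) f := by
        rw [hfdef, map_sum]
        simp only [map_pow, Polynomial.aeval_X]
    _ = 0 := haevalζu
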